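/- Let S = ⟨qm₁,…,qm_d, pn₁,…,pn_k⟩ be a specific gluing of S₁ and S₂, and assume S₂ is symmetric and M-pure with respect to q. Then [ord_S(s + qm₁) = ord_S(s)+1 for all s∈S, and S is symmetric and M-pure] if and only if [ord_{S₁}(s + m₁) = ord_{S₁}(s)+1 for all s∈S₁, and S₁ is symmetric and M-pure]; equivalently (by Bryant's criterion), the tangent cone G(S) is Gorenstein if and only if the tangent cone G(S₁) is Gorenstein. -/

import Mathlib

open scoped Pointwise

/-- `S ⊆ ℕ` is a numerical semigroup: it contains `0`, is closed under
addition, and has finite complement in `ℕ`. -/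
def IsNumSgp (S : Set ℕ) : Prop :=
  (0 : ℕ) ∈ S ∧ (∀ a ∈ S, ∀ b ∈ S, a + b ∈ S) ∧ {x : ℕ | x ∉ S}.Finite

/-- `nM S t` is the `t`-fold sumset of the maximal ideal `M = S \ {0}`,
with the convention `nM S 0 = S`. -/
def nM (S : Set ℕ) : ℕ → Set ℕ
  | 0 => S
  | t + 1 => (S \ {0}) + nM S t

/-- the order of `s` with respect to `S` : the largest `t` with `s ∈ tM`. -/
noncomputable def ordS (S : Set ℕ) (s : ℕ) : ℕ := sSup {t : ℕ | s ∈ nM S t}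

/-- the multiplicity of `S` : its least nonzero element. -/
noncomputable def mult (S : Set ℕ) : ℕ := sInf {x : ℕ | x ∈ S ∧ x ≠ 0}

/-- the Apéry set of `S` with respect to `x` : elements `s ∈ S` with `s - x ∉ S`. -/
def Ap (S : Set ℕ) (x : ℕ) : Set ℕ := {s : ℕ | s ∈ S ∧ ¬ ∃ t ∈ S, s = t + x}

/-- membership of an integer in (the image in `ℤ` of) `S`. -/
def zmem (S : Set ℕ) (z : ℤ) : Prop := ∃ t ∈ S, (t : ℤ) = z

/-- the Frobenius number of `S` : the largest integer not in `S`. -/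
noncomputable def Frob (S : Set ℕ) : ℤ := sSup {z : ℤ | ¬ zmem S z}

/-- `S` is symmetric: for every integer `z`, `z ∈ S` iff `F(S) - z ∉ S`. -/
def IsSymmetric (S : Set ℕ) : Prop := ∀ z : ℤ, zmem S z ↔ ¬ zmem S (Frob S - z)

/-- the set of maximal elements of `Ap S x` with respect to the order
`u ⪯ v` iff `v = u + z` for some `z ∈ S`. -/
def MaxAp (S : Set ℕ) (x : ℕ) : Set ℕ :=
  {w : ℕ | w ∈ Ap S x ∧ ∀ y ∈ Ap S x, (∃ z ∈ S, y = w + z) → y = w}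

/-- the set of maximal elements of `Ap S x` with respect to the order
`u ⪯_M v` iff `v = u + z` for some `z ∈ S` with `ord(v) = ord(u) + ord(z)`. -/
def MaxMAp (S : Set ℕ) (x : ℕ) : Set ℕ :=
  {w : ℕ | w ∈ Ap S x ∧ ∀ y ∈ Ap S x,
    (∃ z ∈ S, y = w + z ∧ ordS S y = ordS S w + ordS S z) → y = w}

/-- `S` is M-pure with respect to `x` : all maximal elements of `Ap S x`
under `⪯_M` have the same order. -/
def MPureWrt (S : Set ℕ) (x : ℕ) : Prop :=
  ∀ w ∈ MaxMAp S x, ∀ w' ∈ MaxMAp S x, ordS S w = ordS S w'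

/-- `S` is M-pure : it is M-pure with respect to its multiplicity. -/
def MPure (S : Set ℕ) : Prop := MPureWrt S (mult S)

/-- `β_i(x)` : the number of elements of `Ap S x` of order `i`. -/
noncomputable def betaS (S : Set ℕ) (x i : ℕ) : ℕ := {w ∈ Ap S x | ordS S w = i}.ncard

/-- `d(x)` : the maximal order of an element of `Ap S x`. -/
noncomputable def dS (S : Set ℕ) (x : ℕ) : ℕ := sSup (ordS S '' Ap S x)

/-- the reduction number of `S` : the least `r` with `(r+1)M = m(S) + rM`. -/
noncomputable def redNum (S : Set ℕ) : ℕ :=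
  sInf {r : ℕ | nM S (r + 1) = (fun y => mult S + y) '' nM S r}

/-- `l_x(S) = max { ord(s+x) - ord(x) - ord(s) : s ∈ S, ord(s) ≤ r }`. -/
noncomputable def lS (S : Set ℕ) (x : ℕ) : ℕ :=
  sSup {t : ℕ | ∃ s ∈ S, ordS S s ≤ redNum S ∧ t = ordS S (s + x) - ordS S x - ordS S s}

/-- the Hilbert function of `S`. -/
noncomputable def HilbS (S : Set ℕ) (t : ℕ) : ℕ := (nM S t \ nM S (t + 1)).ncard

/-- The data of a gluing `S = ⟨q m₁, …, q m_d, p n₁, …, p n_k⟩` of two numerical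
semigroups `S₁ = ⟨m₁, …, m_d⟩` and `S₂ = ⟨n₁, …, n_k⟩`, minimally generated by
`m₁ < ⋯ < m_d` and `n₁ < ⋯ < n_k`, where `p ∈ S₁ \ {m₁, …, m_d}`,
`q ∈ S₂ \ {n₁, …, n_k}` and `gcd(p, q) = 1`. -/
structure Gluing where
  d : ℕ
  k : ℕ
  hd : 0 < d
  hk : 0 < k
  m : Fin d → ℕ
  n : Fin k → ℕ
  p : ℕ
  q : ℕ
  hm : StrictMono m
  hn : StrictMono n
  hmin₁ : ∀ i, m i ∉ AddSubmonoid.closure (Set.range m \ {m i})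
  hmin₂ : ∀ j, n j ∉ AddSubmonoid.closure (Set.range n \ {n j})
  hnum₁ : IsNumSgp (AddSubmonoid.closure (Set.range m) : Set ℕ)
  hnum₂ : IsNumSgp (AddSubmonoid.closure (Set.range n) : Set ℕ)
  hp : p ∈ AddSubmonoid.closure (Set.range m)
  hq : q ∈ AddSubmonoid.closure (Set.range n)
  hpm : p ∉ Set.range m
  hqn : q ∉ Set.range n
  hpq : Nat.gcd p q = 1

/-- the numerical semigroup `S₁ = ⟨m₁, …, m_d⟩`. -/
def Gluing.S₁ (G : Gluing) : Set ℕ := (AddSubmonoid.closure (Set.range G.m) : Set ℕ)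

/-- the numerical semigroup `S₂ = ⟨n₁, …, n_k⟩`. -/
def Gluing.S₂ (G : Gluing) : Set ℕ := (AddSubmonoid.closure (Set.range G.n) : Set ℕ)

/-- the glued numerical semigroup `S = ⟨q m₁, …, q m_d, p n₁, …, p n_k⟩`. -/
def Gluing.S (G : Gluing) : Set ℕ :=
  (AddSubmonoid.closure
    ((fun x => G.q * x) '' Set.range G.m ∪ (fun x => G.p * x) '' Set.range G.n) : Set ℕ)

/-- the smallest generator `m₁` of `S₁`. -/
def Gluing.m₁ (G : Gluing) : ℕ := G.m ⟨0, G.hd⟩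

/-- the smallest generator `n₁` of `S₂`. -/
def Gluing.n₁ (G : Gluing) : ℕ := G.n ⟨0, G.hk⟩

/-- the gluing is specific if `ord_{S₂}(q) + l_q(S₂) ≤ ord_{S₁}(p)`. -/
def Gluing.Specific (G : Gluing) : Prop := ordS G.S₂ G.q + lS G.S₂ G.q ≤ ordS G.S₁ G.p

/-- the gluing is nice if `q = a n₁` for some `1 < a ≤ ord_{S₁}(p)`. -/
def Gluing.Nice (G : Gluing) : Prop := ∃ a : ℕ, 1 < a ∧ a ≤ ordS G.S₁ G.p ∧ G.q = a * G.n₁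

/-!
Every element of the gluing `S` is `q a + p b` with `a ∈ S₁` and `b ∈ Ap(S₂, q)`, uniquely, and
every other representation `q a' + p b'` is obtained by trading `t` copies of `pq`
(`a = a' + t p`, `b' = b + t q`). Past the reduction number every element of `S₂` is `m(S₂)` plus
an element of one order less, so adding `q` raises the order in `S₂` by at most
`ord(q) + l_q(S₂)`; for a specific gluing such a trade therefore never gains order, which gives
`ord_S(q a + p b) = ord(a) + ord(b)`. Consequently `m(S) = q m₁`,
`Ap(S, q m₁) = q Ap(S₁, m₁) + p Ap(S₂, q)` with additive orders, `⪯_M`-maximality splits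
componentwise, and `F(S) = q F(S₁) + p F(S₂) + pq` transports symmetry.
-/

section Order

variable {S : Set ℕ}

theorem mem_nM_succ {x t : ℕ} :
    x ∈ nM S (t + 1) ↔ ∃ u ∈ S \ {0}, ∃ v ∈ nM S t, u + v = x :=
  Set.mem_add

theorem nM_subset (hadd : ∀ a ∈ S, ∀ b ∈ S, a + b ∈ S) : ∀ t, nM S t ⊆ S
  | 0 => subset_rfl
  | t + 1 => by
    rintro _ ⟨u, hu, v, hv, rfl⟩
    exact hadd u hu.1 v (nM_subset hadd t hv)

theorem add_mem_nM_of_mem (hadd : ∀ a ∈ S, ∀ b ∈ S, a + b ∈ S) {x : ℕ} (hx : x ∈ S) :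
    ∀ {t y : ℕ}, y ∈ nM S t → x + y ∈ nM S t
  | 0, y, hy => hadd x hx y hy
  | t + 1, _, hy => by
    obtain ⟨u, hu, v, hv, rfl⟩ := mem_nM_succ.mp hy
    exact mem_nM_succ.mpr ⟨u, hu, x + v, add_mem_nM_of_mem hadd hx hv, by ring⟩

theorem add_mem_nM (hadd : ∀ a ∈ S, ∀ b ∈ S, a + b ∈ S) :
    ∀ {t₁ t₂ x y : ℕ}, x ∈ nM S t₁ → y ∈ nM S t₂ → x + y ∈ nM S (t₁ + t₂)
  | 0, t₂, x, y, hx, hy => by simpa using add_mem_nM_of_mem hadd hx hy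
  | t₁ + 1, t₂, _, y, hx, hy => by
    obtain ⟨u, hu, v, hv, rfl⟩ := mem_nM_succ.mp hx
    rw [Nat.add_right_comm]
    exact mem_nM_succ.mpr ⟨u, hu, v + y, add_mem_nM hadd hv hy, by ring⟩

theorem mul_le_of_mem_nM {c : ℕ} (hc : ∀ u ∈ S, u ≠ 0 → c ≤ u) :
    ∀ {t x : ℕ}, x ∈ nM S t → t * c ≤ x
  | 0, _, _ => by simp
  | t + 1, _, hx => by
    obtain ⟨u, hu, v, hv, rfl⟩ := mem_nM_succ.mp hx
    have := hc u hu.1 hu.2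
    have := mul_le_of_mem_nM hc hv
    linarith

theorem le_of_mem_nM {t x : ℕ} (h : x ∈ nM S t) : t ≤ x := by
  simpa using mul_le_of_mem_nM (fun u _ hu => Nat.one_le_iff_ne_zero.mpr hu) h

theorem bddAbove_setOf_mem_nM (x : ℕ) : BddAbove {t | x ∈ nM S t} :=
  ⟨x, fun _ => le_of_mem_nM⟩

theorem mem_nM_ordS {x : ℕ} (hx : x ∈ S) : x ∈ nM S (ordS S x) :=
  Nat.sSup_mem ⟨0, hx⟩ (bddAbove_setOf_mem_nM x)

theorem le_ordS {x t : ℕ} (h : x ∈ nM S t) : t ≤ ordS S x :=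
  le_csSup (bddAbove_setOf_mem_nM x) h

theorem ordS_le_self (x : ℕ) : ordS S x ≤ x :=
  csSup_le' fun _ => le_of_mem_nM

@[simp]
theorem ordS_zero : ordS S 0 = 0 :=
  Nat.le_zero.mp (ordS_le_self 0)

theorem one_le_ordS (h0 : 0 ∈ S) {x : ℕ} (hx : x ∈ S) (hx0 : x ≠ 0) : 1 ≤ ordS S x :=
  le_ordS (mem_nM_succ.mpr ⟨x, ⟨hx, hx0⟩, 0, h0, rfl⟩)

theorem ordS_add_ordS_le (hadd : ∀ a ∈ S, ∀ b ∈ S, a + b ∈ S) {x y : ℕ}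
    (hx : x ∈ S) (hy : y ∈ S) : ordS S x + ordS S y ≤ ordS S (x + y) :=
  le_ordS (add_mem_nM hadd (mem_nM_ordS hx) (mem_nM_ordS hy))

theorem add_mul_mem (hadd : ∀ a ∈ S, ∀ b ∈ S, a + b ∈ S) {w x : ℕ} (hw : w ∈ S)
    (hx : x ∈ S) : ∀ t, w + t * x ∈ S
  | 0 => by simpa using hw
  | t + 1 => by
    rw [add_mul, one_mul, ← add_assoc]
    exact hadd _ (add_mul_mem hadd hw hx t) x hx

theorem ordS_add_mul_ordS_le (hadd : ∀ a ∈ S, ∀ b ∈ S, a + b ∈ S) {w x : ℕ} (hw : w ∈ S)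
    (hx : x ∈ S) : ∀ t, ordS S w + t * ordS S x ≤ ordS S (w + t * x)
  | 0 => by simp
  | t + 1 => by
    have := ordS_add_mul_ordS_le hadd hw hx t
    have := ordS_add_ordS_le hadd (add_mul_mem hadd hw hx t) hx
    rw [show w + (t + 1) * x = w + t * x + x by ring]
    linarith

theorem mul_mem_nM {T : Set ℕ} {c : ℕ} (hc : c ≠ 0) (hTS : ∀ u ∈ T, c * u ∈ S) :
    ∀ {t a : ℕ}, a ∈ nM T t → c * a ∈ nM S t
  | 0, a, ha => hTS a ha
  | t + 1, _, ha => by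
    obtain ⟨u, hu, v, hv, rfl⟩ := mem_nM_succ.mp ha
    exact mem_nM_succ.mpr ⟨c * u, ⟨hTS u hu.1, mul_ne_zero hc hu.2⟩, c * v,
      mul_mem_nM hc hTS hv, (mul_add c u v).symm⟩

theorem mult_mem {x : ℕ} (hx : x ∈ S) (hx0 : x ≠ 0) : mult S ∈ S ∧ mult S ≠ 0 :=
  Nat.sInf_mem (s := {y | y ∈ S ∧ y ≠ 0}) ⟨x, hx, hx0⟩

theorem mult_le {x : ℕ} (hx : x ∈ S) (hx0 : x ≠ 0) : mult S ≤ x :=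
  Nat.sInf_le ⟨hx, hx0⟩

end Order

section Apery

variable {S : Set ℕ} {x : ℕ}

theorem eq_zero_of_mem_Ap_of_eq_add_mul (hadd : ∀ a ∈ S, ∀ b ∈ S, a + b ∈ S) (hx : x ∈ S)
    {b c t : ℕ} (hb : b ∈ Ap S x) (hc : c ∈ S) (h : b = c + t * x) : t = 0 := by
  cases t with
  | zero => rfl
  | succ t => exact absurd ⟨c + t * x, add_mul_mem hadd hc hx t, by rw [h]; ring⟩ hb.2

theorem exists_mem_Ap_eq_add_mul (hx : 0 < x) :
    ∀ b ∈ S, ∃ b' ∈ Ap S x, ∃ t, b = b' + t * x := by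
  intro b
  induction b using Nat.strong_induction_on with
  | _ b ih =>
    intro hb
    by_cases h : ∃ c ∈ S, b = c + x
    · obtain ⟨c, hc, rfl⟩ := h
      obtain ⟨b', hb', t, rfl⟩ := ih c (by omega) hc
      exact ⟨b', hb', t + 1, by ring⟩
    · exact ⟨b, ⟨hb, h⟩, 0, by simp⟩

theorem mem_Ap_of_add_mem_Ap (hadd : ∀ a ∈ S, ∀ b ∈ S, a + b ∈ S) {b z : ℕ} (hb : b ∈ S)
    (hz : z ∈ S) (h : b + z ∈ Ap S x) : z ∈ Ap S x := by
  refine ⟨hz, ?_⟩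
  rintro ⟨c, hc, rfl⟩
  exact h.2 ⟨b + c, hadd b hb c hc, by ring⟩

/-- The relation `u ⪯_M v` of which `MaxMAp S x` collects the maximal elements. -/
def MPrec (S : Set ℕ) (u v : ℕ) : Prop :=
  ∃ z ∈ S, v = u + z ∧ ordS S v = ordS S u + ordS S z

theorem exists_mem_MaxMAp (h0 : 0 ∈ S) (hx : x ≠ 0) {N : ℕ} (hN : ∀ y, N ≤ y → y ∈ S) :
    ∃ w, w ∈ MaxMAp S x := by
  have hbdd : BddAbove (Ap S x) := by
    refine ⟨N + x, fun b hb => ?_⟩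
    by_contra h
    exact hb.2 ⟨b - x, hN _ (by omega), by omega⟩
  have hne : (Ap S x).Nonempty := ⟨0, h0, fun ⟨_, _, h⟩ => hx (by omega)⟩
  refine ⟨sSup (Ap S x), Nat.sSup_mem hne hbdd, fun y hy ⟨z, _, hyz, _⟩ => ?_⟩
  have := le_csSup hbdd hy
  omega

end Apery

section Frobenius

variable {S : Set ℕ}

theorem zmem_natCast {n : ℕ} : zmem S n ↔ n ∈ S :=
  ⟨fun ⟨_, ht, h⟩ => Nat.cast_injective h ▸ ht, fun h => ⟨n, h, rfl⟩⟩

theorem zmem_add (hadd : ∀ a ∈ S, ∀ b ∈ S, a + b ∈ S) {z w : ℤ}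
    (hz : zmem S z) (hw : zmem S w) : zmem S (z + w) := by
  obtain ⟨t, ht, rfl⟩ := hz
  obtain ⟨u, hu, rfl⟩ := hw
  exact ⟨t + u, hadd t ht u hu, by push_cast; ring⟩

theorem IsNumSgp.exists_bound (hS : IsNumSgp S) : ∃ N, ∀ x, N ≤ x → x ∈ S := by
  obtain ⟨B, hB⟩ := hS.2.2.bddAbove
  exact ⟨B + 1, fun x hx => by_contra fun h => by have := hB h; omega⟩

theorem isGreatest_frob (hS : IsNumSgp S) : IsGreatest {z : ℤ | ¬ zmem S z} (Frob S) := by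
  obtain ⟨N, hN⟩ := hS.exists_bound
  have hbdd : BddAbove {z : ℤ | ¬ zmem S z} := by
    refine ⟨N, fun z hz => ?_⟩
    by_contra! h
    lift z to ℕ using by omega
    exact hz (zmem_natCast.mpr (hN z (by omega)))
  have hne : {z : ℤ | ¬ zmem S z}.Nonempty := ⟨-1, fun ⟨t, _, h⟩ => by omega⟩
  exact ⟨Int.csSup_mem hne hbdd, fun _ hz => le_csSup hbdd hz⟩

theorem zmem_of_frob_lt (hS : IsNumSgp S) {z : ℤ} (h : Frob S < z) : zmem S z := by
  by_contra hz
  exact absurd ((isGreatest_frob hS).2 hz) (not_le.mpr h)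

theorem isSymmetric_iff (hadd : ∀ a ∈ S, ∀ b ∈ S, a + b ∈ S) (hF : ¬ zmem S (Frob S)) :
    IsSymmetric S ↔ ∀ z, ¬ zmem S z → zmem S (Frob S - z) := by
  refine ⟨fun h z hz => not_not.mp (mt (h z).mpr hz), fun h z => ⟨fun hz h' => hF ?_, ?_⟩⟩
  · simpa using zmem_add hadd hz h'
  · exact not_imp_comm.mp (h z)

theorem coe_le_frob_add_of_mem_Ap (hS : IsNumSgp S) {x b : ℕ} (hb : b ∈ Ap S x) :
    (b : ℤ) ≤ Frob S + x := by
  have : ¬ zmem S (b - x) := fun ⟨t, ht, h⟩ => hb.2 ⟨t, ht, by omega⟩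
  have := (isGreatest_frob hS).2 this
  omega

theorem exists_mem_Ap_eq_frob_add (hS : IsNumSgp S) {x : ℕ} (hx : 0 < x) :
    ∃ b ∈ Ap S x, (b : ℤ) = Frob S + x := by
  obtain ⟨b, hb, hbF⟩ := zmem_of_frob_lt hS (show Frob S < Frob S + x by omega)
  refine ⟨b, ⟨hb, fun ⟨t, ht, h⟩ => (isGreatest_frob hS).1 ⟨t, ht, by omega⟩⟩, hbF⟩

end Frobenius

section Reduction

variable {S : Set ℕ}

theorem mem_nM_succ_cases {t x : ℕ} (hx : x ∈ nM S (t + 1)) :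
    (mult S ≤ x ∧ x - mult S ∈ nM S t) ∨ (t + 1) * (mult S + 1) ≤ x := by
  obtain ⟨u, hu, v, hv, rfl⟩ := mem_nM_succ.mp hx
  by_cases hum : u = mult S
  · subst hum
    exact Or.inl ⟨by omega, by simpa using hv⟩
  have hu' : mult S + 1 ≤ u := by have := mult_le hu.1 hu.2; omega
  cases t with
  | zero => exact Or.inr (by omega)
  | succ t =>
    rcases mem_nM_succ_cases hv with ⟨hmv, hv'⟩ | hv'
    · refine Or.inl ⟨by omega, mem_nM_succ.mpr ⟨u, hu, v - mult S, hv', by omega⟩⟩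
    · right
      nlinarith

variable {N : ℕ} (hN : ∀ x, N ≤ x → x ∈ S)
include hN

theorem mult_mem_of_bound : mult S ∈ S ∧ mult S ≠ 0 :=
  mult_mem (hN (N + 1) (by omega)) (by omega)

theorem mem_nM_of_le {t x : ℕ} (hx : t * mult S + N ≤ x) : x ∈ nM S t := by
  induction t generalizing x with
  | zero => exact hN x (by simpa using hx)
  | succ t ih =>
    rw [add_one_mul] at hx
    exact mem_nM_succ.mpr ⟨mult S, mult_mem_of_bound hN, x - mult S, ih (by omega), by omega⟩

theorem lt_of_ordS_le {x r : ℕ} (h : ordS S x ≤ r) : x < (r + 1) * mult S + N := by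
  by_contra! hx
  have := le_ordS (mem_nM_of_le hN hx)
  omega

theorem nM_succ_eq_of_bound : nM S (N + 1) = {mult S} + nM S N := by
  refine subset_antisymm (fun x hx => ?_)
    (Set.add_subset_add_right (Set.singleton_subset_iff.mpr (mult_mem_of_bound hN)))
  rw [Set.singleton_add]
  rcases mem_nM_succ_cases hx with ⟨hmx, hx'⟩ | hx'
  · exact ⟨x - mult S, hx', by simp only; omega⟩
  · have : (N + 1) * (mult S + 1) = N * mult S + N + mult S + 1 := by ring
    exact ⟨x - mult S, mem_nM_of_le hN (by omega), by simp only; omega⟩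

theorem exists_eq_mult_add_of_redNum_le {e x : ℕ} (he : redNum S ≤ e)
    (hx : x ∈ nM S (e + 1)) : ∃ y ∈ nM S e, x = mult S + y := by
  have hr : nM S (redNum S + 1) = {mult S} + nM S (redNum S) := by
    rw [Set.singleton_add]
    refine Nat.sInf_mem (s := {r | nM S (r + 1) = (fun y => mult S + y) '' nM S r}) ⟨N, ?_⟩
    show nM S (N + 1) = _
    rw [← Set.singleton_add]
    exact nM_succ_eq_of_bound hN
  have key : ∀ j, nM S (redNum S + j + 1) = {mult S} + nM S (redNum S + j) := by
    intro j
    induction j with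
    | zero => exact hr
    | succ j ih =>
      change (S \ {0}) + nM S (redNum S + j + 1) =
        {mult S} + ((S \ {0}) + nM S (redNum S + j))
      rw [ih, add_left_comm]
  obtain ⟨j, rfl⟩ : ∃ j, e = redNum S + j := ⟨e - redNum S, by omega⟩
  rw [key, Set.singleton_add] at hx
  obtain ⟨y, hy, rfl⟩ := hx
  exact ⟨y, hy, rfl⟩

theorem bddAbove_lS_set (x : ℕ) :
    BddAbove {t : ℕ | ∃ s ∈ S, ordS S s ≤ redNum S ∧
      t = ordS S (s + x) - ordS S x - ordS S s} := by
  refine ⟨(redNum S + 1) * mult S + N + x, ?_⟩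
  rintro t ⟨s, hs, hord, rfl⟩
  have := lt_of_ordS_le hN hord
  have := ordS_le_self (S := S) (s + x)
  omega

/-- The defining inequality of `l_x(S)` holds only up to the reduction number; it propagates
to all orders because beyond it every element is `m(S)` plus an element of one order less. -/
theorem ordS_add_le_ordS_add_lS (hadd : ∀ a ∈ S, ∀ b ∈ S, a + b ∈ S) {x w : ℕ} (hx : x ∈ S)
    (hw : w ∈ S) :
    ordS S (w + x) ≤ ordS S w + ordS S x + lS S x := by
  induction hord : ordS S w using Nat.strong_induction_on generalizing w with
  | _ e ih =>
    by_cases he : e ≤ redNum S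
    · have : ordS S (w + x) - ordS S x - ordS S w ≤ lS S x :=
        le_csSup (bddAbove_lS_set hN x) ⟨w, hw, by omega, rfl⟩
      omega
    obtain ⟨e, rfl⟩ : ∃ e', e = e' + 1 := ⟨e - 1, by omega⟩
    obtain ⟨w', hw', rfl⟩ :=
      exists_eq_mult_add_of_redNum_le hN (by omega) (hord ▸ mem_nM_ordS hw)
    have hm := mult_mem_of_bound hN
    have hw'S : w' ∈ S := nM_subset hadd e hw'
    have hord' : ordS S w' = e := by
      have := le_ordS (mem_nM_succ.mpr ⟨mult S, hm, w', mem_nM_ordS hw'S, rfl⟩)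
      have := le_ordS hw'
      omega
    have hIH := ih e (by omega) hw'S hord'
    have hwx : mult S + w' + x ∈ S := hadd _ hw x hx
    by_cases hEr : ordS S (mult S + w' + x) ≤ redNum S
    · omega
    obtain ⟨y, hy, hyeq⟩ := exists_eq_mult_add_of_redNum_le hN
      (e := ordS S (mult S + w' + x) - 1) (by omega)
      (by rw [Nat.sub_add_cancel (by omega)]; exact mem_nM_ordS hwx)
    obtain rfl : y = w' + x := by omega
    have := le_ordS hy
    omega

theorem ordS_add_mul_le (hadd : ∀ a ∈ S, ∀ b ∈ S, a + b ∈ S) {x w : ℕ} (hx : x ∈ S)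
    (hw : w ∈ S) (t : ℕ) : ordS S (w + t * x) ≤ ordS S w + t * (ordS S x + lS S x) := by
  induction t with
  | zero => simp
  | succ t ih =>
    have := ordS_add_le_ordS_add_lS hN hadd hx (add_mul_mem hadd hw hx t)
    rw [show w + (t + 1) * x = w + t * x + x by ring]
    linarith

theorem le_mul_mult_of_ordS_mul_le {x c : ℕ} (h : ∀ t, ordS S (t * x) ≤ t * c) :
    x ≤ c * mult S := by
  by_contra! hx
  have hbig : ((mult S + N) * c + 1) * mult S + N ≤ (mult S + N) * x :=
    calc ((mult S + N) * c + 1) * mult S + N = (mult S + N) * (c * mult S + 1) := by ring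
      _ ≤ (mult S + N) * x := Nat.mul_le_mul_left _ hx
  have := le_ordS (mem_nM_of_le hN hbig)
  have := h (mult S + N)
  omega

end Reduction

section Generators

variable {d : ℕ} {m : Fin d → ℕ}

theorem le_of_mem_closure_range (hm : Monotone m) (hd : 0 < d) {x : ℕ}
    (hx : x ∈ AddSubmonoid.closure (Set.range m)) (hx0 : x ≠ 0) : m ⟨0, hd⟩ ≤ x := by
  induction hx using AddSubmonoid.closure_induction with
  | mem _ h =>
    obtain ⟨i, rfl⟩ := h
    exact hm (Fin.mk_le_mk.mpr (Nat.zero_le i))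
  | zero => exact absurd rfl hx0
  | add x y _ _ hx hy =>
    by_cases h : x = 0
    · subst h
      simpa using hy (by simpa using hx0)
    · exact (hx h).trans (Nat.le_add_right x y)

theorem mult_closure_range (hm : Monotone m) (hd : 0 < d) (h0 : m ⟨0, hd⟩ ≠ 0) :
    mult (AddSubmonoid.closure (Set.range m) : Set ℕ) = m ⟨0, hd⟩ := by
  have hmem : m ⟨0, hd⟩ ∈ AddSubmonoid.closure (Set.range m) :=
    AddSubmonoid.subset_closure ⟨_, rfl⟩
  obtain ⟨h₁, h₂⟩ := mult_mem (S := (AddSubmonoid.closure (Set.range m) : Set ℕ)) hmem h0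
  exact le_antisymm (mult_le hmem h0) (le_of_mem_closure_range hm hd h₁ h₂)

theorem ne_one_of_mem_closure_range (hm : Monotone m) (hd : 0 < d) (h0 : m ⟨0, hd⟩ ≠ 0)
    {x : ℕ} (hx : x ∈ AddSubmonoid.closure (Set.range m)) (hxm : x ∉ Set.range m) : x ≠ 1 := by
  rintro rfl
  have := le_of_mem_closure_range hm hd hx one_ne_zero
  exact hxm ⟨⟨0, hd⟩, by omega⟩

end Generators

theorem exists_eq_add_mul_of_mul_add_mul_eq {p q A A' B B' : ℤ} (hqp : IsCoprime q p)
    (hq : q ≠ 0) (h : q * A + p * B = q * A' + p * B') :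
    ∃ t : ℤ, B' = B + t * q ∧ A = A' + t * p := by
  obtain ⟨t, ht⟩ : q ∣ B' - B := hqp.dvd_of_dvd_mul_left ⟨A - A', by linear_combination -h⟩
  exact ⟨t, by linear_combination ht, mul_left_cancel₀ hq (by linear_combination h + p * ht)⟩

namespace Gluing

variable (G : Gluing)

theorem isNumSgp_S₁ : IsNumSgp G.S₁ := G.hnum₁

theorem isNumSgp_S₂ : IsNumSgp G.S₂ := G.hnum₂

theorem zero_mem_S₁ : 0 ∈ G.S₁ := G.hnum₁.1

theorem zero_mem_S₂ : 0 ∈ G.S₂ := G.hnum₂.1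

theorem add_mem_S₁ : ∀ a ∈ G.S₁, ∀ b ∈ G.S₁, a + b ∈ G.S₁ := G.hnum₁.2.1

theorem add_mem_S₂ : ∀ a ∈ G.S₂, ∀ b ∈ G.S₂, a + b ∈ G.S₂ := G.hnum₂.2.1

theorem add_mem_S : ∀ a ∈ G.S, ∀ b ∈ G.S, a + b ∈ G.S := fun _ ha _ hb => add_mem ha hb

theorem m₁_ne_zero : G.m₁ ≠ 0 := fun h => G.hmin₁ _ (h ▸ zero_mem _)

theorem n₁_ne_zero : G.n₁ ≠ 0 := fun h => G.hmin₂ _ (h ▸ zero_mem _)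

theorem mult_S₁ : mult G.S₁ = G.m₁ :=
  mult_closure_range G.hm.monotone G.hd G.m₁_ne_zero

theorem m₁_mem : G.m₁ ∈ G.S₁ := AddSubmonoid.subset_closure ⟨_, rfl⟩

theorem m₁_le {x : ℕ} (hx : x ∈ G.S₁) (hx0 : x ≠ 0) : G.m₁ ≤ x :=
  le_of_mem_closure_range G.hm.monotone G.hd hx hx0

theorem one_lt_q : 1 < G.q := by
  have h₁ : G.q ≠ 1 := ne_one_of_mem_closure_range G.hn.monotone G.hk G.n₁_ne_zero G.hq G.hqn
  have h₂ : G.q ≠ 0 := fun h =>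
    ne_one_of_mem_closure_range G.hm.monotone G.hd G.m₁_ne_zero G.hp G.hpm
      (by simpa [h] using G.hpq)
  omega

theorem one_lt_p : 1 < G.p := by
  have h₁ : G.p ≠ 1 := ne_one_of_mem_closure_range G.hm.monotone G.hd G.m₁_ne_zero G.hp G.hpm
  have h₂ : G.p ≠ 0 := fun h => by
    have := G.hpq
    rw [h, Nat.gcd_zero_left] at this
    exact G.one_lt_q.ne' this
  omega

theorem q_pos : 0 < G.q := by
  have := G.one_lt_q
  omega

theorem isCoprime_q_p : IsCoprime (G.q : ℤ) G.p :=
  Nat.isCoprime_iff_coprime.mpr (Nat.Coprime.symm G.hpq)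

theorem mem_S_iff {s : ℕ} : s ∈ G.S ↔ ∃ a ∈ G.S₁, ∃ b ∈ G.S₂, s = G.q * a + G.p * b := by
  have himage : ∀ c (T : Set ℕ), AddSubmonoid.closure ((fun x => c * x) '' T) =
      (AddSubmonoid.closure T).map (AddMonoidHom.mulLeft c) :=
    fun c T => (AddMonoidHom.map_mclosure (AddMonoidHom.mulLeft c) T).symm
  rw [Gluing.S, AddSubmonoid.closure_union, himage, himage, SetLike.mem_coe,
    AddSubmonoid.mem_sup]
  constructor
  · rintro ⟨_, ⟨a, ha, rfl⟩, _, ⟨b, hb, rfl⟩, rfl⟩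
    exact ⟨a, ha, b, hb, rfl⟩
  · rintro ⟨a, ha, b, hb, rfl⟩
    exact ⟨_, ⟨a, ha, rfl⟩, _, ⟨b, hb, rfl⟩, rfl⟩

theorem q_mul_add_p_mul_mem {a b : ℕ} (ha : a ∈ G.S₁) (hb : b ∈ G.S₂) :
    G.q * a + G.p * b ∈ G.S :=
  G.mem_S_iff.mpr ⟨a, ha, b, hb, rfl⟩

theorem q_mul_mem {a : ℕ} (ha : a ∈ G.S₁) : G.q * a ∈ G.S := by
  simpa using G.q_mul_add_p_mul_mem ha G.zero_mem_S₂

theorem p_mul_mem {b : ℕ} (hb : b ∈ G.S₂) : G.p * b ∈ G.S := by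
  simpa using G.q_mul_add_p_mul_mem G.zero_mem_S₁ hb

theorem exists_eq_add_mul_of_mem_Ap {b b' : ℕ} (hb : b ∈ Ap G.S₂ G.q) (hb' : b' ∈ G.S₂)
    {A A' : ℤ} (h : G.q * A + G.p * b = G.q * A' + G.p * b') :
    ∃ t : ℕ, b' = b + t * G.q ∧ A = A' + t * G.p := by
  obtain ⟨t, hbt, hAt⟩ :=
    exists_eq_add_mul_of_mul_add_mul_eq G.isCoprime_q_p (by exact_mod_cast G.q_pos.ne') h
  obtain ⟨t, rfl | rfl⟩ := Int.eq_nat_or_neg t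
  · exact ⟨t, by exact_mod_cast hbt, hAt⟩
  · obtain rfl : t = 0 := eq_zero_of_mem_Ap_of_eq_add_mul G.add_mem_S₂ G.hq hb hb'
      (by linarith)
    exact ⟨0, by simpa using hbt, by simpa using hAt⟩

theorem exists_eq_add_mul_of_mem_Ap_nat {a a' b b' : ℕ} (hb : b ∈ Ap G.S₂ G.q)
    (hb' : b' ∈ G.S₂) (h : G.q * a + G.p * b = G.q * a' + G.p * b') :
    ∃ t, b' = b + t * G.q ∧ a = a' + t * G.p := by
  obtain ⟨t, h₁, h₂⟩ := G.exists_eq_add_mul_of_mem_Ap hb hb' (A := a) (A' := a')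
    (by exact_mod_cast h)
  exact ⟨t, h₁, by exact_mod_cast h₂⟩

theorem exists_repr {s : ℕ} (hs : s ∈ G.S) :
    ∃ a ∈ G.S₁, ∃ b ∈ Ap G.S₂ G.q, s = G.q * a + G.p * b := by
  obtain ⟨a, ha, b, hb, rfl⟩ := G.mem_S_iff.mp hs
  obtain ⟨b', hb', t, rfl⟩ := exists_mem_Ap_eq_add_mul G.q_pos b hb
  exact ⟨a + t * G.p, add_mul_mem G.add_mem_S₁ ha G.hp t, b', hb', by ring⟩

theorem eq_of_repr_eq {a a' b b' : ℕ} (hb : b ∈ Ap G.S₂ G.q) (hb' : b' ∈ Ap G.S₂ G.q)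
    (h : G.q * a + G.p * b = G.q * a' + G.p * b') : a = a' ∧ b = b' := by
  obtain ⟨t, rfl, rfl⟩ := G.exists_eq_add_mul_of_mem_Ap_nat hb hb'.1 h
  obtain rfl := eq_zero_of_mem_Ap_of_eq_add_mul G.add_mem_S₂ G.hq hb' hb.1 rfl
  simp

theorem ordS_add_ordS_le_ordS_S {a b : ℕ} (ha : a ∈ G.S₁) (hb : b ∈ G.S₂) :
    ordS G.S₁ a + ordS G.S₂ b ≤ ordS G.S (G.q * a + G.p * b) :=
  le_ordS <| add_mem_nM G.add_mem_S
    (mul_mem_nM G.q_pos.ne' (fun _ => G.q_mul_mem) (mem_nM_ordS ha))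
    (mul_mem_nM (by have := G.one_lt_p; omega) (fun _ => G.p_mul_mem) (mem_nM_ordS hb))

theorem exists_repr_of_mem_nM {t s : ℕ} (hs : s ∈ nM G.S t) :
    ∃ a ∈ G.S₁, ∃ b ∈ G.S₂, s = G.q * a + G.p * b ∧ t ≤ ordS G.S₁ a + ordS G.S₂ b := by
  induction t generalizing s with
  | zero =>
    obtain ⟨a, ha, b, hb, rfl⟩ := G.mem_S_iff.mp hs
    exact ⟨a, ha, b, hb, rfl, Nat.zero_le _⟩
  | succ t ih =>
    obtain ⟨u, hu, v, hv, rfl⟩ := mem_nM_succ.mp hs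
    obtain ⟨a₀, ha₀, b₀, hb₀, rfl⟩ := G.mem_S_iff.mp hu.1
    obtain ⟨a, ha, b, hb, rfl, ht⟩ := ih hv
    have h₀ : 1 ≤ ordS G.S₁ a₀ + ordS G.S₂ b₀ := by
      by_cases ha0 : a₀ = 0
      · have hb0 : b₀ ≠ 0 := by
          rintro rfl
          exact hu.2 (by simp [ha0])
        have := one_le_ordS G.zero_mem_S₂ hb₀ hb0
        omega
      · have := one_le_ordS G.zero_mem_S₁ ha₀ ha0
        omega
    refine ⟨a₀ + a, G.add_mem_S₁ _ ha₀ _ ha, b₀ + b, G.add_mem_S₂ _ hb₀ _ hb, by ring, ?_⟩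
    have := ordS_add_ordS_le G.add_mem_S₁ ha₀ ha
    have := ordS_add_ordS_le G.add_mem_S₂ hb₀ hb
    omega

/-- Any other representation of `q a + p b` is obtained by moving `t` copies of `pq` from the
`S₁` side to the `S₂` side, which by specificity costs at least as much order as it gains. -/
theorem ordS_S_q_mul_add_p_mul (hG : G.Specific) {a b : ℕ} (ha : a ∈ G.S₁)
    (hb : b ∈ Ap G.S₂ G.q) :
    ordS G.S (G.q * a + G.p * b) = ordS G.S₁ a + ordS G.S₂ b := by
  refine le_antisymm ?_ (G.ordS_add_ordS_le_ordS_S ha hb.1)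
  obtain ⟨N, hN⟩ := G.isNumSgp_S₂.exists_bound
  obtain ⟨a', ha', b', hb', heq, hord⟩ :=
    G.exists_repr_of_mem_nM (mem_nM_ordS (G.q_mul_add_p_mul_mem ha hb.1))
  obtain ⟨t, rfl, rfl⟩ := G.exists_eq_add_mul_of_mem_Ap_nat hb hb' heq
  have h₁ := ordS_add_mul_ordS_le G.add_mem_S₁ ha' G.hp t
  have h₂ := ordS_add_mul_le hN G.add_mem_S₂ G.hq hb.1 t
  have h₃ := Nat.mul_le_mul_left t hG
  omega

theorem q_le_ordS_p_mul_mult (hG : G.Specific) : G.q ≤ ordS G.S₁ G.p * mult G.S₂ := by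
  obtain ⟨N, hN⟩ := G.isNumSgp_S₂.exists_bound
  refine le_mul_mult_of_ordS_mul_le hN fun t => ?_
  have := ordS_add_mul_le hN G.add_mem_S₂ G.hq G.zero_mem_S₂ t
  simp only [zero_add, ordS_zero] at this
  exact this.trans (Nat.mul_le_mul_left t hG)

theorem mult_S (hG : G.Specific) : mult G.S = G.q * G.m₁ := by
  have hmem := G.q_mul_mem G.m₁_mem
  have hne : G.q * G.m₁ ≠ 0 := mul_ne_zero G.q_pos.ne' G.m₁_ne_zero
  refine le_antisymm (mult_le hmem hne) ?_
  obtain ⟨hμ, hμ0⟩ := mult_mem hmem hne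
  obtain ⟨a, ha, b, hb, hμeq⟩ := G.mem_S_iff.mp hμ
  rw [hμeq]
  by_cases ha0 : a = 0
  · have hb0 : b ≠ 0 := by rintro rfl; simp [ha0] at hμeq; exact hμ0 hμeq
    have hpm₁ : ordS G.S₁ G.p * G.m₁ ≤ G.p :=
      mul_le_of_mem_nM (fun _ => G.m₁_le) (mem_nM_ordS G.hp)
    have := G.q_le_ordS_p_mul_mult hG
    have := mult_le hb hb0
    calc G.q * G.m₁ ≤ ordS G.S₁ G.p * mult G.S₂ * G.m₁ := by gcongr
      _ = ordS G.S₁ G.p * G.m₁ * mult G.S₂ := by ring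
      _ ≤ G.p * b := by gcongr
      _ ≤ G.q * a + G.p * b := Nat.le_add_left _ _
  · calc G.q * G.m₁ ≤ G.q * a := Nat.mul_le_mul_left _ (G.m₁_le ha ha0)
      _ ≤ G.q * a + G.p * b := Nat.le_add_right _ _

theorem zero_mem_Ap_S₂ : 0 ∈ Ap G.S₂ G.q :=
  ⟨G.zero_mem_S₂, fun ⟨_, _, h⟩ => by have := G.q_pos; omega⟩

theorem exists_int_repr (z : ℤ) : ∃ A : ℤ, ∃ b ∈ Ap G.S₂ G.q, z = G.q * A + G.p * b := by
  obtain ⟨N, hN⟩ := G.isNumSgp_S₂.exists_bound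
  obtain ⟨u, v, huv⟩ := G.isCoprime_q_p
  have hq : (0 : ℤ) < G.q := by exact_mod_cast G.q_pos
  have hr := Int.emod_def (v * z) G.q
  have hr₀ := Int.emod_nonneg (v * z) hq.ne'
  obtain ⟨b₁, hb₁⟩ : ∃ b₁ : ℕ, (b₁ : ℤ) = v * z % G.q + G.q * N :=
    ⟨_, Int.toNat_of_nonneg (by positivity)⟩
  have hb₁S : b₁ ∈ G.S₂ := hN b₁ (by zify; nlinarith)
  obtain ⟨b, hb, t, rfl⟩ := exists_mem_Ap_eq_add_mul G.q_pos b₁ hb₁S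
  refine ⟨u * z + G.p * (v * z / G.q) - G.p * N + G.p * t, b, hb, ?_⟩
  push_cast at hb₁
  linear_combination (-z) * huv - G.p * hb₁ - G.p * hr

theorem zmem_S_iff {A : ℤ} {b : ℕ} (hb : b ∈ Ap G.S₂ G.q) :
    zmem G.S (G.q * A + G.p * b) ↔ zmem G.S₁ A := by
  constructor
  · rintro ⟨s, hs, hsA⟩
    obtain ⟨a', ha', b', hb', rfl⟩ := G.mem_S_iff.mp hs
    obtain ⟨t, -, hA⟩ := G.exists_eq_add_mul_of_mem_Ap hb hb' (A' := a')
      (by push_cast at hsA; linarith)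
    exact ⟨a' + t * G.p, add_mul_mem G.add_mem_S₁ ha' G.hp t, by push_cast; linarith⟩
  · rintro ⟨a, ha, rfl⟩
    exact ⟨_, G.q_mul_add_p_mul_mem ha hb.1, by push_cast; ring⟩

theorem isGreatest_frob_S : IsGreatest {z : ℤ | ¬ zmem G.S z}
    (G.q * Frob G.S₁ + G.p * Frob G.S₂ + G.p * G.q) := by
  obtain ⟨c, hc, hcF⟩ := exists_mem_Ap_eq_frob_add G.isNumSgp_S₂ G.q_pos
  refine ⟨?_, fun z hz => ?_⟩
  · show ¬ _
    rw [show G.q * Frob G.S₁ + G.p * Frob G.S₂ + G.p * G.q = G.q * Frob G.S₁ + G.p * (c : ℤ) by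
      rw [hcF]; ring, G.zmem_S_iff hc]
    exact (isGreatest_frob G.isNumSgp_S₁).1
  · obtain ⟨A, b, hb, rfl⟩ := G.exists_int_repr z
    rw [Set.mem_ofPred_eq, G.zmem_S_iff hb] at hz
    have h₁ := mul_le_mul_of_nonneg_left ((isGreatest_frob G.isNumSgp_S₁).2 hz)
      (Int.natCast_nonneg G.q)
    have h₂ := mul_le_mul_of_nonneg_left (coe_le_frob_add_of_mem_Ap G.isNumSgp_S₂ hb)
      (Int.natCast_nonneg G.p)
    linarith

theorem frob_S : Frob G.S = G.q * Frob G.S₁ + G.p * Frob G.S₂ + G.p * G.q :=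
  G.isGreatest_frob_S.csSup_eq

theorem isSymmetric_S_of_isSymmetric_S₁ (hsym₂ : IsSymmetric G.S₂)
    (hsym₁ : IsSymmetric G.S₁) : IsSymmetric G.S := by
  rw [isSymmetric_iff G.add_mem_S (G.frob_S ▸ G.isGreatest_frob_S.1)]
  intro z hz
  obtain ⟨A, b, hb, rfl⟩ := G.exists_int_repr z
  rw [G.zmem_S_iff hb] at hz
  obtain ⟨a', ha', ha'eq⟩ : zmem G.S₁ (Frob G.S₁ - A) := (hsym₁ _).mpr (by simpa using hz)
  obtain ⟨b', hb', hb'eq⟩ : zmem G.S₂ (Frob G.S₂ + G.q - b) := (hsym₂ _).mpr fun ⟨t, ht, h⟩ =>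
    hb.2 ⟨t, ht, by omega⟩
  refine ⟨_, G.q_mul_add_p_mul_mem ha' hb', ?_⟩
  rw [G.frob_S]
  push_cast
  rw [ha'eq, hb'eq]
  ring

theorem isSymmetric_S₁_of_isSymmetric_S (hsym : IsSymmetric G.S) : IsSymmetric G.S₁ := by
  rw [isSymmetric_iff G.add_mem_S₁ (isGreatest_frob G.isNumSgp_S₁).1]
  intro w hw
  obtain ⟨c, hc, hcF⟩ := exists_mem_Ap_eq_frob_add G.isNumSgp_S₂ G.q_pos
  have hqw : ¬ zmem G.S (G.q * w + G.p * (0 : ℕ)) := by rwa [G.zmem_S_iff G.zero_mem_Ap_S₂]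
  have hF : Frob G.S - (G.q * w + G.p * (0 : ℕ)) = G.q * (Frob G.S₁ - w) + G.p * c := by
    rw [G.frob_S, hcF]
    push_cast
    ring
  rw [← G.zmem_S_iff hc, ← hF]
  exact (hsym _).mpr (by rwa [sub_sub_cancel])

theorem mem_Ap_S_iff {w : ℕ} : w ∈ Ap G.S (G.q * G.m₁) ↔
    ∃ a ∈ Ap G.S₁ G.m₁, ∃ b ∈ Ap G.S₂ G.q, w = G.q * a + G.p * b := by
  constructor
  · rintro ⟨hw, hw'⟩
    obtain ⟨a, ha, b, hb, rfl⟩ := G.exists_repr hw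
    refine ⟨a, ⟨ha, ?_⟩, b, hb, rfl⟩
    rintro ⟨u, hu, rfl⟩
    exact hw' ⟨_, G.q_mul_add_p_mul_mem hu hb.1, by ring⟩
  · rintro ⟨a, ha, b, hb, rfl⟩
    refine ⟨G.q_mul_add_p_mul_mem ha.1 hb.1, ?_⟩
    rintro ⟨s, hs, hseq⟩
    obtain ⟨α, hα, β, hβ, rfl⟩ := G.exists_repr hs
    obtain ⟨h, -⟩ := G.eq_of_repr_eq hb hβ (a' := α + G.m₁) (by rw [hseq]; ring)
    exact ha.2 ⟨α, hα, h⟩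

theorem ordS_S_q_mul (hG : G.Specific) {a : ℕ} (ha : a ∈ G.S₁) :
    ordS G.S (G.q * a) = ordS G.S₁ a := by
  simpa using G.ordS_S_q_mul_add_p_mul hG ha G.zero_mem_Ap_S₂

theorem ordS_S_p_mul (hG : G.Specific) {b : ℕ} (hb : b ∈ Ap G.S₂ G.q) :
    ordS G.S (G.p * b) = ordS G.S₂ b := by
  simpa using G.ordS_S_q_mul_add_p_mul hG G.zero_mem_S₁ hb

theorem mPrec_S_of_mPrec_S₁ (hG : G.Specific) {a a' b : ℕ} (ha : a ∈ G.S₁) (ha' : a' ∈ G.S₁)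
    (hb : b ∈ Ap G.S₂ G.q) (h : MPrec G.S₁ a a') :
    MPrec G.S (G.q * a + G.p * b) (G.q * a' + G.p * b) := by
  obtain ⟨z, hz, rfl, hord⟩ := h
  refine ⟨G.q * z, G.q_mul_mem hz, by ring, ?_⟩
  rw [G.ordS_S_q_mul_add_p_mul hG ha' hb, G.ordS_S_q_mul_add_p_mul hG ha hb,
    G.ordS_S_q_mul hG hz, hord]
  ring

theorem mPrec_S_of_mPrec_S₂ (hG : G.Specific) {a b b' : ℕ} (ha : a ∈ G.S₁)
    (hb : b ∈ Ap G.S₂ G.q) (hb' : b' ∈ Ap G.S₂ G.q) (h : MPrec G.S₂ b b') :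
    MPrec G.S (G.q * a + G.p * b) (G.q * a + G.p * b') := by
  obtain ⟨z, hz, rfl, hord⟩ := h
  have hzAp := mem_Ap_of_add_mem_Ap G.add_mem_S₂ hb.1 hz hb'
  refine ⟨G.p * z, G.p_mul_mem hz, by ring, ?_⟩
  rw [G.ordS_S_q_mul_add_p_mul hG ha hb', G.ordS_S_q_mul_add_p_mul hG ha hb,
    G.ordS_S_p_mul hG hzAp, hord]
  ring

theorem mem_MaxMAp_of_mem_MaxMAp_S (hG : G.Specific) {a b : ℕ} (ha : a ∈ Ap G.S₁ G.m₁)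
    (hb : b ∈ Ap G.S₂ G.q) (hw : G.q * a + G.p * b ∈ MaxMAp G.S (G.q * G.m₁)) :
    a ∈ MaxMAp G.S₁ G.m₁ ∧ b ∈ MaxMAp G.S₂ G.q := by
  refine ⟨⟨ha, fun a' ha' h => ?_⟩, ⟨hb, fun b' hb' h => ?_⟩⟩
  · have := hw.2 _ (G.mem_Ap_S_iff.mpr ⟨a', ha', b, hb, rfl⟩)
      (G.mPrec_S_of_mPrec_S₁ hG ha.1 ha'.1 hb h)
    exact (G.eq_of_repr_eq hb hb this).1
  · have := hw.2 _ (G.mem_Ap_S_iff.mpr ⟨a, ha, b', hb', rfl⟩)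
      (G.mPrec_S_of_mPrec_S₂ hG ha.1 hb hb' h)
    exact (G.eq_of_repr_eq hb' hb this).2

theorem mem_MaxMAp_S (hG : G.Specific) {a b : ℕ} (ha : a ∈ MaxMAp G.S₁ G.m₁)
    (hb : b ∈ MaxMAp G.S₂ G.q) : G.q * a + G.p * b ∈ MaxMAp G.S (G.q * G.m₁) := by
  obtain ⟨N, hN⟩ := G.isNumSgp_S₂.exists_bound
  refine ⟨G.mem_Ap_S_iff.mpr ⟨a, ha.1, b, hb.1, rfl⟩, fun y hy ⟨z, hz, hyz, hord⟩ => ?_⟩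
  obtain ⟨a', ha', b', hb', rfl⟩ := G.mem_Ap_S_iff.mp hy
  obtain ⟨α, hα, β, hβ, rfl⟩ := G.exists_repr hz
  obtain ⟨t, hbt, rfl⟩ := G.exists_eq_add_mul_of_mem_Ap_nat hb' (G.add_mem_S₂ _ hb.1.1 _ hβ.1)
    (a' := a + α) (b' := b + β) (by rw [hyz]; ring)
  rw [G.ordS_S_q_mul_add_p_mul hG ha'.1 hb', G.ordS_S_q_mul_add_p_mul hG ha.1.1 hb.1,
    G.ordS_S_q_mul_add_p_mul hG hα hβ] at hord
  have hαt : α + t * G.p ∈ G.S₁ := add_mul_mem G.add_mem_S₁ hα G.hp t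
  -- the order of `a'` splits, and this forces `t = 0` by maximality of `a`
  have hA := ordS_add_ordS_le G.add_mem_S₁ ha.1.1 hαt
  have hA' := ordS_add_mul_ordS_le G.add_mem_S₁ hα G.hp t
  have hB := ordS_add_ordS_le G.add_mem_S₂ hb.1.1 hβ.1
  have hB' := ordS_add_mul_le hN G.add_mem_S₂ G.hq hb'.1 t
  have hspec := Nat.mul_le_mul_left t hG
  rw [← hbt] at hB'
  rw [← add_assoc] at hA
  have haa : a + α + t * G.p = a := ha.2 _ ha' ⟨α + t * G.p, hαt, by ring, by omega⟩
  obtain ⟨rfl, rfl⟩ : α = 0 ∧ t = 0 := by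
    have := G.one_lt_p
    constructor <;> nlinarith
  simp only [zero_mul, add_zero, ordS_zero] at hbt hord ⊢
  have hbb : b' = b := hb.2 _ hb' ⟨β, hβ.1, hbt.symm, by omega⟩
  rw [hbb]

theorem mPureWrt_S_iff (hG : G.Specific) (hMp₂ : MPureWrt G.S₂ G.q) :
    MPureWrt G.S (G.q * G.m₁) ↔ MPureWrt G.S₁ G.m₁ := by
  constructor
  · intro hP a ha a' ha'
    obtain ⟨N, hN⟩ := G.isNumSgp_S₂.exists_bound
    obtain ⟨b, hb⟩ := exists_mem_MaxMAp G.zero_mem_S₂ G.q_pos.ne' hN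
    have := hP _ (G.mem_MaxMAp_S hG ha hb) _ (G.mem_MaxMAp_S hG ha' hb)
    rw [G.ordS_S_q_mul_add_p_mul hG ha.1.1 hb.1,
      G.ordS_S_q_mul_add_p_mul hG ha'.1.1 hb.1] at this
    omega
  · intro hP w hw w' hw'
    obtain ⟨a, ha, b, hb, rfl⟩ := G.mem_Ap_S_iff.mp hw.1
    obtain ⟨a', ha', b', hb', rfl⟩ := G.mem_Ap_S_iff.mp hw'.1
    obtain ⟨haM, hbM⟩ := G.mem_MaxMAp_of_mem_MaxMAp_S hG ha hb hw
    obtain ⟨haM', hbM'⟩ := G.mem_MaxMAp_of_mem_MaxMAp_S hG ha' hb' hw'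
    rw [G.ordS_S_q_mul_add_p_mul hG ha.1 hb, G.ordS_S_q_mul_add_p_mul hG ha'.1 hb',
      hP _ haM _ haM', hMp₂ _ hbM _ hbM']

theorem ordS_add_mult_iff (hG : G.Specific) :
    (∀ s ∈ G.S, ordS G.S (s + G.q * G.m₁) = ordS G.S s + 1) ↔
      ∀ a ∈ G.S₁, ordS G.S₁ (a + G.m₁) = ordS G.S₁ a + 1 := by
  have hm₁ := G.m₁_mem
  constructor
  · intro h a ha
    have := h _ (G.q_mul_mem ha)
    rwa [← mul_add, G.ordS_S_q_mul hG (G.add_mem_S₁ _ ha _ hm₁), G.ordS_S_q_mul hG ha] at this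
  · intro h s hs
    obtain ⟨a, ha, b, hb, rfl⟩ := G.exists_repr hs
    rw [show G.q * a + G.p * b + G.q * G.m₁ = G.q * (a + G.m₁) + G.p * b by ring,
      G.ordS_S_q_mul_add_p_mul hG (G.add_mem_S₁ _ ha _ hm₁) hb, G.ordS_S_q_mul_add_p_mul hG ha hb,
      h a ha]
    ring

end Gluing

/-- for a specific gluing `S` of `S₁` and `S₂` with `S₂` symmetric
and M-pure with respect to `q`:
[`ord_S(s + qm₁) = ord_S(s)+1` for all `s ∈ S`, and `S` is symmetric and M-pure] iff
[`ord_{S₁}(s + m₁) = ord_{S₁}(s)+1` for all `s ∈ S₁`, and `S₁` is symmetric and M-pure];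
equivalently (by Bryant's criterion) `G(S)` is Gorenstein iff `G(S₁)` is Gorenstein. -/
theorem stmt17 (G : Gluing) (hG : G.Specific)
    (hsym₂ : IsSymmetric G.S₂) (hMp₂ : MPureWrt G.S₂ G.q) :
    ((∀ s ∈ G.S, ordS G.S (s + G.q * G.m₁) = ordS G.S s + 1) ∧
        IsSymmetric G.S ∧ MPure G.S) ↔
      ((∀ s ∈ G.S₁, ordS G.S₁ (s + G.m₁) = ordS G.S₁ s + 1) ∧
        IsSymmetric G.S₁ ∧ MPure G.S₁) := by
  have hMPure : MPure G.S ↔ MPure G.S₁ := by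
    rw [MPure, MPure, G.mult_S hG, G.mult_S₁]
    exact G.mPureWrt_S_iff hG hMp₂
  exact and_congr (G.ordS_add_mult_iff hG)
    (and_congr ⟨G.isSymmetric_S₁_of_isSymmetric_S, G.isSymmetric_S_of_isSymmetric_S₁ hsym₂⟩ hMPure)
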